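/- Let F be a free group, R a normal subgroup of F, and G = F/R. Then the second group homology of G with trivial coefficients ℤ satisfies Hopf's formula: H₂(G,ℤ) is isomorphic to the abelian group (R ∩ [F,F]) / [F,R]. -/

import Mathlib

/-!
Let `G = F/R` and let `K = C₂/B₂` be the cokernel of `d₃` in the bar complex, so that
`H₂(G) = ker (d₂ : K → ℤ[G])`. The classes `[g|h] ∈ K` form a 2-cocycle; let `E` be the central
extension of `G` by `K` that it defines. Sending each free generator `x` to `(x̄, 0)` gives
`Φ : F → E`, which maps `R` into the central copy of `K`; call the restriction `θ : R → K`.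
Following `Φ` by `E → ℤ[G]`, `(g, k) ↦ d₂ k + [g]`, counts the letters of a word by their image
in `G`, so `d₂ ∘ θ` vanishes on `R ∩ [F,F]` and `θ` maps `R ∩ [F,F]` into `H₂(G)`.

Onto: for a section `s` of `F → G`, `[g|h]` differs from `θ (s g * s h * (s (g h))⁻¹)` by a
linear function of `d₂ (g,h)`, so every 2-cycle is `θ ρ` with `ρ` of zero letter count; and such
a `ρ` lies in `[F,F] · ker Φ`, because generators with the same image in `G` have the same image
under `Φ`.

Kernel: `[F,R] ≤ ker Φ` because `Φ(R)` is central. Conversely the factor set of `s` in `F/[F,R]`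
is central, so `E` maps to `F/[F,R]`; composed with `Φ` this agrees with the projection modulo
the centre, hence on `[F,F]`, so `ker Φ ∩ [F,F]` dies in `F/[F,R]`.
-/

/-- Second boundary map `ℤ[G²] → ℤ[G]` of the bar complex computing the homology of `G`
with trivial coefficients `ℤ`: `d₂(g,h) = [h] - [gh] + [g]`. -/
noncomputable def barD2 (G : Type*) [Group G] : ((G × G) →₀ ℤ) →ₗ[ℤ] (G →₀ ℤ) :=
  Finsupp.lift (G →₀ ℤ) ℤ (G × G) fun p =>
    Finsupp.single p.2 1 - Finsupp.single (p.1 * p.2) 1 + Finsupp.single p.1 1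

/-- Third boundary map `ℤ[G³] → ℤ[G²]` of the bar complex:
`d₃(g,h,k) = (h,k) - (gh,k) + (g,hk) - (g,h)`. -/
noncomputable def barD3 (G : Type*) [Group G] : ((G × G × G) →₀ ℤ) →ₗ[ℤ] ((G × G) →₀ ℤ) :=
  Finsupp.lift ((G × G) →₀ ℤ) ℤ (G × G × G) fun t =>
    Finsupp.single (t.2.1, t.2.2) 1 - Finsupp.single (t.1 * t.2.1, t.2.2) 1 +
      Finsupp.single (t.1, t.2.1 * t.2.2) 1 - Finsupp.single (t.1, t.2.1) 1

/-- The second group homology `H₂(G, ℤ)` of `G` with trivial coefficients `ℤ`,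
defined as `ker d₂ / im d₃` in the bar complex (since `im d₃ ⊆ ker d₂`, this is the
quotient of `ker d₂` by the pullback of `range d₃`). -/
noncomputable abbrev H2 (G : Type*) [Group G] :=
  LinearMap.ker (barD2 G) ⧸
    (LinearMap.range (barD3 G)).comap (LinearMap.ker (barD2 G)).subtype

noncomputable section

section BarComplex

variable {G : Type*} [Group G]

open Finsupp

theorem barD2_single (g h : G) :
    barD2 G (single (g, h) 1) = single h 1 - single (g * h) 1 + single g 1 := by
  simp [barD2]

theorem barD3_single (g h k : G) :
    barD3 G (single (g, h, k) 1) =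
      single (h, k) 1 - single (g * h, k) 1 + single (g, h * k) 1 - single (g, h) 1 := by
  simp [barD3]

theorem barD2_comp_barD3 : barD2 G ∘ₗ barD3 G = 0 := by
  ext ⟨g, h, k⟩ : 2
  simp only [LinearMap.comp_apply, lsingle_apply, LinearMap.zero_apply, barD3_single, map_add,
    map_sub, barD2_single, mul_assoc]
  abel

variable (G) in
abbrev CokerD3 := ((G × G) →₀ ℤ) ⧸ LinearMap.range (barD3 G)

namespace CokerD3

def mk (g h : G) : CokerD3 G := Submodule.Quotient.mk (single (g, h) 1)

theorem mk_cocycle (g h k : G) : mk h k + mk g (h * k) = mk g h + mk (g * h) k := by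
  have hB := (Submodule.Quotient.mk_eq_zero (LinearMap.range (barD3 G))).2
    (LinearMap.mem_range_self _ (single (g, h, k) 1))
  rw [barD3_single, Submodule.Quotient.mk_sub, Submodule.Quotient.mk_add,
    Submodule.Quotient.mk_sub] at hB
  unfold mk
  linear_combination (norm := abel) hB

theorem mk_one_left (g : G) : mk 1 g = mk (1 : G) 1 := by
  simpa using mk_cocycle (1 : G) 1 g

theorem mk_one_right (g : G) : mk g 1 = mk (1 : G) 1 := by
  simpa using (mk_cocycle g 1 1).symm

variable {A : Type*} [AddCommGroup A]

def lift (f : G → G → A) (hf : ∀ g h k, f h k + f g (h * k) = f g h + f (g * h) k) :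
    CokerD3 G →ₗ[ℤ] A :=
  Submodule.liftQ _ (Finsupp.lift A ℤ (G × G) fun p => f p.1 p.2) <| by
    rw [LinearMap.range_le_ker_iff]
    ext ⟨g, h, k⟩ : 2
    simp only [LinearMap.comp_apply, lsingle_apply, LinearMap.zero_apply, barD3_single, map_add,
      map_sub, lift_apply, zero_smul, sum_single_index, one_smul]
    linear_combination (norm := abel) hf g h k

@[simp]
theorem lift_mk (f : G → G → A) (hf) (g h : G) : lift f hf (mk g h) = f g h := by
  simp [lift, mk]

def d2 : CokerD3 G →ₗ[ℤ] (G →₀ ℤ) :=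
  Submodule.liftQ _ (barD2 G) (LinearMap.range_le_ker_iff.2 barD2_comp_barD3)

@[simp]
theorem d2_mk (g h : G) : d2 (mk g h) = single h 1 - single (g * h) 1 + single g 1 :=
  barD2_single g h

end CokerD3

end BarComplex

section FactorSet

variable {G N : Type*} [Group G] [Group N]

def factorSet (s : G → N) (g h : G) : N := s g * s h * (s (g * h))⁻¹

theorem factorSet_cocycle {s : G → N} (hs : ∀ g h, factorSet s g h ∈ Subgroup.center N)
    (g h k : G) :
    factorSet s h k * factorSet s g (h * k) = factorSet s g h * factorSet s (g * h) k := by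
  have hconj : factorSet s h k = s g * factorSet s h k * (s g)⁻¹ := by
    rw [Subgroup.mem_center_iff.1 (hs h k), mul_inv_cancel_right]
  rw [hconj]
  simp only [factorSet, ← mul_assoc g h k]
  group

theorem factorSet_out_mem {F : Type*} [Group F] {R : Subgroup F} [R.Normal] (g h : F ⧸ R) :
    factorSet (fun g : F ⧸ R => g.out) g h ∈ R := by
  rw [← QuotientGroup.eq_one_iff]
  simp [factorSet]

end FactorSet

open scoped commutatorElement in
theorem QuotientGroup.mk_mem_center_of_mem {F : Type*} [Group F] {R : Subgroup F} [R.Normal]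
    {ρ : F} (hρ : ρ ∈ R) : (ρ : F ⧸ ⁅(⊤ : Subgroup F), R⁆) ∈ Subgroup.center _ := by
  refine Subgroup.mem_center_iff.2 fun g => ?_
  induction g using QuotientGroup.induction_on with | H g => ?_
  rw [← QuotientGroup.mk_mul, ← QuotientGroup.mk_mul, QuotientGroup.eq]
  have : (g * ρ)⁻¹ * (ρ * g) = ⁅ρ⁻¹ * g⁻¹, ρ⁆ := by group
  rw [this]
  exact Subgroup.commutator_mem_commutator (Subgroup.mem_top _) hρ

open scoped IsMulCommutative in
theorem MonoidHom.eq_of_mem_commutator_of_comp_mk_center {H N : Type*} [Group H] [Group N]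
    {f₁ f₂ : H →* N}
    (h : (QuotientGroup.mk' (Subgroup.center N)).comp f₁ = (QuotientGroup.mk' _).comp f₂)
    {w : H} (hw : w ∈ commutator H) : f₁ w = f₂ w := by
  have hc (w : H) : (f₁ w)⁻¹ * f₂ w ∈ Subgroup.center N :=
    QuotientGroup.eq.1 (DFunLike.congr_fun h w)
  let δ : H →* Subgroup.center N :=
    MonoidHom.mk' (fun w => ⟨(f₁ w)⁻¹ * f₂ w, hc w⟩) fun a b => Subtype.ext <| by
      have hcomm := Subgroup.mem_center_iff.1 (hc a) (f₁ b)⁻¹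
      simp only [map_mul, mul_inv_rev, Subgroup.coe_mul]
      rw [mul_assoc (f₁ b)⁻¹, ← mul_assoc (f₁ a)⁻¹, ← mul_assoc (f₁ b)⁻¹, hcomm, mul_assoc]
  simpa [δ, inv_mul_eq_one] using congrArg Subtype.val (Abelianization.commutator_subset_ker δ hw)

namespace IsFreeGroup

variable {F : Type*} [Group F] [IsFreeGroup F] {Y : Type*}

def countBy (e : Generators F → Y) : F →* Multiplicative (Y →₀ ℤ) :=
  lift fun x => .ofAdd (Finsupp.single (e x) 1)

@[simp]
theorem countBy_of (e : Generators F → Y) (x : Generators F) :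
    countBy e (of x) = .ofAdd (Finsupp.single (e x) 1) :=
  lift_of _ _

theorem ker_countBy_le {N : Type*} [Group N] (e : Generators F → Y) (f : F →* N)
    (hf : ∀ x y, e x = e y → f (of x) = f (of y)) :
    (countBy e).ker ≤ commutator F ⊔ f.ker := by
  classical
  let Q := Abelianization F ⧸ f.ker.map Abelianization.of
  let q : F →* Q := (QuotientGroup.mk' _).comp Abelianization.of
  have hq : ∀ a b, f a = f b → q a = q b := fun a b hab => by
    refine QuotientGroup.eq.2 ⟨a⁻¹ * b, ?_, ?_⟩
    · rw [SetLike.mem_coe, MonoidHom.mem_ker, map_mul, map_inv, hab, inv_mul_cancel]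
    · rw [map_mul, map_inv]
  -- `Ξ` sends `y` to the class of some generator over it; by `hq` the choice does not matter.
  let Ξ : (Y →₀ ℤ) →ₗ[ℤ] Additive Q := Finsupp.lift _ ℤ _ fun y =>
    if h : ∃ x, e x = y then .ofMul (q (of h.choose)) else 0
  have hΞ : (AddMonoidHom.toMultiplicativeLeft Ξ.toAddMonoidHom).comp (countBy e) = q := by
    refine ext_hom fun x => ?_
    have h : ∃ x', e x' = e x := ⟨x, rfl⟩
    rw [MonoidHom.comp_apply, countBy_of]
    show (Ξ (Finsupp.single (e x) 1)).toMul = q (of x)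
    rw [Finsupp.lift_apply, Finsupp.sum_single_index (by simp), one_smul, dif_pos h, toMul_ofMul,
      hq _ _ (hf _ _ h.choose_spec)]
  intro w hw
  have hqw : q w = 1 := by rw [← hΞ, MonoidHom.comp_apply, hw, map_one]
  obtain ⟨p, hp, hpw⟩ := (QuotientGroup.eq_one_iff _).1 hqw
  have hc : p⁻¹ * w ∈ commutator F := by
    rw [← Abelianization.ker_of, MonoidHom.mem_ker, map_mul, map_inv, hpw, inv_mul_cancel]
  rw [sup_comm]
  simpa using Subgroup.mul_mem_sup (S := f.ker) hp hc

end IsFreeGroup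

def Submodule.kerQuotEquivKerLiftQ {R M N : Type*} [Ring R] [AddCommGroup M] [AddCommGroup N]
    [Module R M] [Module R N] (p : Submodule R M) (f : M →ₗ[R] N) (h : p ≤ LinearMap.ker f) :
    (LinearMap.ker f ⧸ p.comap (LinearMap.ker f).subtype) ≃ₗ[R] LinearMap.ker (p.liftQ f h) :=
  (Submodule.quotEquivOfEq _ _ (by rw [LinearMap.ker_comp, Submodule.ker_mkQ])).trans <|
    (p.mkQ ∘ₗ (LinearMap.ker f).subtype).quotKerEquivRange.trans <|
      LinearEquiv.ofEq _ _ <| by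
        rw [LinearMap.range_comp, Submodule.range_subtype, Submodule.ker_liftQ]

def h2EquivKerD2 (G : Type*) [Group G] : H2 G ≃ₗ[ℤ] LinearMap.ker (CokerD3.d2 (G := G)) :=
  Submodule.kerQuotEquivKerLiftQ _ _ _

-- The identity is `⟨1, -mk 1 1⟩`, so the central copy of `CokerD3 G` is `ι k = ⟨1, k - mk 1 1⟩`,
-- and every element factors as `⟨g, k⟩ = ⟨g, 0⟩ * ι k`.
@[ext]
structure UnivExt (G : Type*) [Group G] where
  fst : G
  snd : CokerD3 G

namespace UnivExt

variable {G : Type*} [Group G]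

instance : Mul (UnivExt G) :=
  ⟨fun a b => ⟨a.fst * b.fst, a.snd + b.snd + CokerD3.mk a.fst b.fst⟩⟩

instance : One (UnivExt G) := ⟨⟨1, -CokerD3.mk 1 1⟩⟩

instance : Inv (UnivExt G) :=
  ⟨fun a => ⟨a.fst⁻¹, -a.snd - CokerD3.mk 1 1 - CokerD3.mk a.fst⁻¹ a.fst⟩⟩

@[simp] theorem mul_fst (a b : UnivExt G) : (a * b).fst = a.fst * b.fst := rfl
@[simp] theorem mul_snd (a b : UnivExt G) :
    (a * b).snd = a.snd + b.snd + CokerD3.mk a.fst b.fst := rfl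
@[simp] theorem one_fst : (1 : UnivExt G).fst = 1 := rfl
@[simp] theorem one_snd : (1 : UnivExt G).snd = -CokerD3.mk 1 1 := rfl
@[simp] theorem inv_fst (a : UnivExt G) : a⁻¹.fst = a.fst⁻¹ := rfl
@[simp] theorem inv_snd (a : UnivExt G) :
    a⁻¹.snd = -a.snd - CokerD3.mk 1 1 - CokerD3.mk a.fst⁻¹ a.fst := rfl

instance : Group (UnivExt G) :=
  Group.ofLeftAxioms
    (fun a b c => UnivExt.ext (mul_assoc _ _ _) <| by
      have := CokerD3.mk_cocycle a.fst b.fst c.fst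
      simp only [mul_snd, mul_fst]
      linear_combination (norm := abel) -this)
    (fun a => UnivExt.ext (one_mul _) <| by simp [CokerD3.mk_one_left])
    (fun a => UnivExt.ext (inv_mul_cancel _) <| by
      simp only [mul_snd, inv_snd, inv_fst, one_snd]
      abel)

def fstHom : UnivExt G →* G where
  toFun := fst
  map_one' := rfl
  map_mul' _ _ := rfl

@[simp] theorem fstHom_apply (a : UnivExt G) : fstHom a = a.fst := rfl

def ι : Multiplicative (CokerD3 G) →* UnivExt G where
  toFun k := ⟨1, k.toAdd - CokerD3.mk 1 1⟩
  map_one' := UnivExt.ext rfl (by simp)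
  map_mul' a b := UnivExt.ext (one_mul _).symm <| by
    simp only [toAdd_mul, mul_snd]
    abel

theorem ι_apply (k : Multiplicative (CokerD3 G)) : ι k = ⟨1, k.toAdd - CokerD3.mk 1 1⟩ := rfl

theorem ι_injective : Function.Injective (ι (G := G)) := fun a b h => by
  simpa [ι_apply] using congrArg snd h

theorem ι_ofAdd_snd_add {a : UnivExt G} (ha : a.fst = 1) :
    ι (.ofAdd (a.snd + CokerD3.mk 1 1)) = a :=
  UnivExt.ext ha.symm (by simp [ι_apply])

theorem ι_mem_center (k : Multiplicative (CokerD3 G)) : ι k ∈ Subgroup.center (UnivExt G) :=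
  Subgroup.mem_center_iff.2 fun a => UnivExt.ext (by simp [ι_apply]) <| by
    simp only [ι_apply, mul_snd, CokerD3.mk_one_right, CokerD3.mk_one_left, add_left_inj]
    abel

section Lift

variable {N : Type*} [Group N] (s : G → N) (φ : Multiplicative (CokerD3 G) →* N)
  (hφ : ∀ k, φ k ∈ Subgroup.center N)
  (hs : ∀ g h, s g * s h = s (g * h) * φ (.ofAdd (CokerD3.mk g h)))

def lift : UnivExt G →* N :=
  MonoidHom.mk' (fun a => s a.fst * φ (.ofAdd a.snd)) fun a b => by
    have hcomm := fun k => Subgroup.mem_center_iff.1 (hφ k)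
    calc s (a.fst * b.fst) * φ (.ofAdd (a.snd + b.snd + CokerD3.mk a.fst b.fst))
        = s (a.fst * b.fst) * φ (.ofAdd (CokerD3.mk a.fst b.fst)) *
            (φ (.ofAdd a.snd) * φ (.ofAdd b.snd)) := by
          rw [ofAdd_add, ofAdd_add, map_mul, map_mul, hcomm, mul_assoc]
      _ = s a.fst * φ (.ofAdd a.snd) * (s b.fst * φ (.ofAdd b.snd)) := by
          rw [← hs, mul_assoc, ← mul_assoc (s b.fst), hcomm (.ofAdd a.snd), mul_assoc (φ _),
            ← mul_assoc]

theorem lift_apply (a : UnivExt G) : lift s φ hφ hs a = s a.fst * φ (.ofAdd a.snd) := rfl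

theorem lift_ι (k : Multiplicative (CokerD3 G)) : lift s φ hφ hs (ι k) = φ k := by
  have hσ : φ (.ofAdd (CokerD3.mk 1 1)) = s 1 := by simpa using (hs 1 1).symm
  rw [lift_apply, ι_apply, ofAdd_sub, map_div, hσ, ofAdd_toAdd, mul_div,
    Subgroup.mem_center_iff.1 (hφ k), mul_div_cancel_right]

end Lift

def boundaryHom : UnivExt G →* Multiplicative (G →₀ ℤ) :=
  lift (fun g => .ofAdd (Finsupp.single g 1))
    (AddMonoidHom.toMultiplicative CokerD3.d2.toAddMonoidHom)
    (fun _ => Subgroup.mem_center_iff.2 fun _ => mul_comm _ _)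
    (fun g h => by
      simp only [AddMonoidHom.toMultiplicative_apply_apply, toAdd_ofAdd,
        LinearMap.toAddMonoidHom_coe, CokerD3.d2_mk, ← ofAdd_add]
      exact congrArg Multiplicative.ofAdd (by abel))

theorem boundaryHom_ι (k : Multiplicative (CokerD3 G)) :
    boundaryHom (ι k) = .ofAdd (CokerD3.d2 k.toAdd) :=
  lift_ι ..

open scoped IsMulCommutative in
def liftOfCentral {N : Type*} [Group N] (s : G → N)
    (hs : ∀ g h, factorSet s g h ∈ Subgroup.center N) : UnivExt G →* N :=
  lift s ((Subgroup.center N).subtype.comp <| AddMonoidHom.toMultiplicativeLeft <|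
      (CokerD3.lift (fun g h => .ofMul ⟨factorSet s g h, hs g h⟩) fun g h k =>
        congrArg Additive.ofMul <| Subtype.ext <| factorSet_cocycle hs g h k).toAddMonoidHom)
    (fun k => SetLike.coe_mem _)
    (fun g h => by
      simp only [MonoidHom.coe_comp, Subgroup.coe_subtype, AddMonoidHom.coe_toMultiplicativeLeft,
        LinearMap.toAddMonoidHom_coe, Function.comp_apply, toAdd_ofAdd, CokerD3.lift_mk,
        toMul_ofMul]
      rw [Subgroup.mem_center_iff.1 (hs g h), factorSet, inv_mul_cancel_right])

theorem liftOfCentral_mk_zero {N : Type*} [Group N] (s : G → N)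
    (hs : ∀ g h, factorSet s g h ∈ Subgroup.center N) (g : G) :
    liftOfCentral s hs ⟨g, 0⟩ = s g :=
  (congrArg (s g * ·) (map_one _)).trans (mul_one _)

end UnivExt

namespace Hopf

open IsFreeGroup UnivExt

variable {F : Type*} [Group F] [IsFreeGroup F] (R : Subgroup F) [R.Normal]

def toUnivExt : F →* UnivExt (F ⧸ R) := IsFreeGroup.lift fun x => ⟨(of x : F), 0⟩

@[simp]
theorem toUnivExt_of (x : Generators F) : toUnivExt R (of x) = ⟨(of x : F), 0⟩ :=
  IsFreeGroup.lift_of _ _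

@[simp]
theorem toUnivExt_fst (w : F) : (toUnivExt R w).fst = w :=
  DFunLike.congr_fun (ext_hom (f := fstHom.comp (toUnivExt R)) (g := QuotientGroup.mk' R)
    fun x => by simp) w

theorem ker_toUnivExt_le : (toUnivExt R).ker ≤ R := fun w hw => by
  simpa using congrArg UnivExt.fst (MonoidHom.mem_ker.1 hw)

theorem ι_ofAdd_toUnivExt {ρ : F} (hρ : ρ ∈ R) :
    ι (.ofAdd ((toUnivExt R ρ).snd + CokerD3.mk 1 1)) = toUnivExt R ρ :=
  ι_ofAdd_snd_add (by simpa using hρ)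

def toCoker : R →* Multiplicative (CokerD3 (F ⧸ R)) where
  toFun ρ := .ofAdd ((toUnivExt R ρ).snd + CokerD3.mk 1 1)
  map_one' := by simp
  map_mul' a b := ι_injective <| by
    rw [map_mul, ι_ofAdd_toUnivExt R (a * b).2, ι_ofAdd_toUnivExt R a.2,
      ι_ofAdd_toUnivExt R b.2, Subgroup.coe_mul, map_mul]

theorem ι_toCoker (ρ : R) : ι (toCoker R ρ) = toUnivExt R ρ := ι_ofAdd_toUnivExt R ρ.2

theorem toCoker_eq_one_iff (ρ : R) : toCoker R ρ = 1 ↔ (ρ : F) ∈ (toUnivExt R).ker := by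
  rw [MonoidHom.mem_ker, ← ι_toCoker, ← map_one ι, ι_injective.eq_iff]

theorem boundaryHom_comp_toUnivExt :
    boundaryHom.comp (toUnivExt R) = countBy fun x => ((of x : F) : F ⧸ R) :=
  ext_hom fun x => by simp [boundaryHom, lift_apply]

theorem d2_toCoker (ρ : R) :
    CokerD3.d2 (toCoker R ρ).toAdd = (countBy (fun x => ((of x : F) : F ⧸ R)) ρ).toAdd := by
  rw [← boundaryHom_comp_toUnivExt, MonoidHom.comp_apply, ← ι_toCoker, boundaryHom_ι,
    toAdd_ofAdd]

theorem d2_toCoker_eq_zero {ρ : R} (hρ : (ρ : F) ∈ commutator F) :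
    CokerD3.d2 (toCoker R ρ).toAdd = 0 := by
  rw [d2_toCoker, Abelianization.commutator_subset_ker _ hρ, toAdd_one]

theorem mk_eq_toCoker_factorSet (g h : F ⧸ R) :
    CokerD3.mk g h = (toCoker R ⟨_, factorSet_out_mem g h⟩).toAdd +
      (toUnivExt R (g * h).out).snd - (toUnivExt R g.out).snd - (toUnivExt R h.out).snd := by
  have hsplit : g.out * h.out = factorSet (fun g : F ⧸ R => g.out) g h * (g * h).out := by
    simp [factorSet]
  have := congrArg (fun w => (toUnivExt R w).snd) hsplit
  rw [map_mul, map_mul, ← ι_toCoker R ⟨_, factorSet_out_mem g h⟩] at this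
  simp only [mul_snd, ι_apply, toUnivExt_fst, QuotientGroup.out_eq', CokerD3.mk_one_left] at this
  linear_combination (norm := abel) this

theorem exists_toCoker_eq_mk_add (z : ((F ⧸ R) × (F ⧸ R)) →₀ ℤ) :
    ∃ ρ : R, (toCoker R ρ).toAdd = Submodule.Quotient.mk z +
      Finsupp.lift _ ℤ _ (fun g => (toUnivExt R g.out).snd) (barD2 _ z) := by
  induction z using Finsupp.induction_linear with
  | zero => exact ⟨1, by simp⟩
  | add z₁ z₂ h₁ h₂ =>
    obtain ⟨ρ₁, h₁⟩ := h₁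
    obtain ⟨ρ₂, h₂⟩ := h₂
    refine ⟨ρ₁ * ρ₂, ?_⟩
    rw [map_mul, toAdd_mul, h₁, h₂, map_add, map_add, Submodule.Quotient.mk_add]
    abel
  | single p n =>
    obtain ⟨g, h⟩ := p
    refine ⟨⟨_, factorSet_out_mem g h⟩ ^ n, ?_⟩
    rw [show Finsupp.single (g, h) n = n • Finsupp.single (g, h) 1 by simp, map_zpow, toAdd_zpow,
      map_zsmul, Submodule.Quotient.mk_smul, map_zsmul, ← smul_add, barD2_single]
    congr 1
    simp only [map_add, map_sub, Finsupp.lift_apply, zero_smul, Finsupp.sum_single_index, one_smul]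
    rw [show Submodule.Quotient.mk (Finsupp.single (g, h) 1) = CokerD3.mk g h from rfl,
      mk_eq_toCoker_factorSet]
    abel

theorem exists_toCoker_eq_of_d2_eq_zero {k : CokerD3 (F ⧸ R)} (hk : CokerD3.d2 k = 0) :
    ∃ d : R, (d : F) ∈ commutator F ∧ toCoker R d = .ofAdd k := by
  obtain ⟨z, rfl⟩ := Submodule.Quotient.mk_surjective _ k
  obtain ⟨ρ, hρ⟩ := exists_toCoker_eq_mk_add R z
  have hz : barD2 _ z = 0 := hk
  rw [hz, map_zero, add_zero] at hρ
  have hcount : (ρ : F) ∈ (countBy fun x => ((of x : F) : F ⧸ R)).ker := by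
    rw [MonoidHom.mem_ker, ← ofAdd_toAdd (countBy _ _), ← d2_toCoker, hρ]
    exact congrArg _ hk
  obtain ⟨d, hd, p, hp, hdp⟩ := Subgroup.mem_sup_of_normal_right.1 <|
    ker_countBy_le _ (toUnivExt R) (fun x y hxy => by simp [hxy]) hcount
  have hpR : p ∈ R := ker_toUnivExt_le R hp
  have hdR : d ∈ R := by simpa [← hdp] using R.mul_mem ρ.2 (R.inv_mem hpR)
  refine ⟨⟨d, hdR⟩, hd, ?_⟩
  have : ρ = ⟨d, hdR⟩ * ⟨p, hpR⟩ := Subtype.ext hdp.symm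
  rw [← ofAdd_toAdd (toCoker R _), ← hρ, this, map_mul,
    (toCoker_eq_one_iff R ⟨p, hpR⟩).2 hp, mul_one, ofAdd_toAdd]

open scoped commutatorElement in
theorem commutator_top_le_ker_toUnivExt : ⁅(⊤ : Subgroup F), R⁆ ≤ (toUnivExt R).ker :=
  Subgroup.commutator_le.2 fun a _ ρ hρ => by
    rw [MonoidHom.mem_ker, map_commutatorElement, commutatorElement_eq_one_iff_commute,
      ← ι_toCoker R ⟨ρ, hρ⟩]
    exact Subgroup.mem_center_iff.1 (ι_mem_center _) _

theorem ker_toUnivExt_inf_commutator :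
    (toUnivExt R).ker ⊓ commutator F = ⁅(⊤ : Subgroup F), R⁆ := by
  refine le_antisymm (fun d ⟨hΦ, hd⟩ => ?_)
    (le_inf (commutator_top_le_ker_toUnivExt R) (Subgroup.commutator_mono le_top le_top))
  let s : F ⧸ R → F ⧸ ⁅(⊤ : Subgroup F), R⁆ := fun g => (g.out : F)
  have hs g h : factorSet s g h ∈ Subgroup.center _ := by
    simpa [s, factorSet] using QuotientGroup.mk_mem_center_of_mem (factorSet_out_mem g h)
  have hΛ := MonoidHom.eq_of_mem_commutator_of_comp_mk_center
    (f₁ := (liftOfCentral s hs).comp (toUnivExt R)) (f₂ := QuotientGroup.mk' _) ?_ hd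
  · rw [MonoidHom.comp_apply, MonoidHom.mem_ker.1 hΦ, map_one] at hΛ
    exact (QuotientGroup.eq_one_iff d).1 hΛ.symm
  · refine ext_hom fun x => ?_
    simp only [MonoidHom.comp_apply, toUnivExt_of, liftOfCentral_mk_zero, QuotientGroup.mk'_apply]
    rw [QuotientGroup.eq, ← QuotientGroup.mk_inv, ← QuotientGroup.mk_mul]
    exact QuotientGroup.mk_mem_center_of_mem (QuotientGroup.eq.1 (QuotientGroup.out_eq' _))

def hopfHom :
    ↥(R ⊓ commutator F) →* Multiplicative (LinearMap.ker (CokerD3.d2 (G := F ⧸ R))) where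
  toFun d := .ofAdd ⟨(toCoker R ⟨d, d.2.1⟩).toAdd, d2_toCoker_eq_zero R d.2.2⟩
  map_one' := Multiplicative.toAdd.injective <| Subtype.ext <| by
    show (toCoker R 1).toAdd = 0
    rw [map_one, toAdd_one]
  map_mul' a b := Multiplicative.toAdd.injective <| Subtype.ext <| by
    show (toCoker R (⟨a, a.2.1⟩ * ⟨b, b.2.1⟩)).toAdd =
      (toCoker R ⟨a, a.2.1⟩).toAdd + (toCoker R ⟨b, b.2.1⟩).toAdd
    rw [map_mul, toAdd_mul]

theorem coe_toAdd_hopfHom (d : ↥(R ⊓ commutator F)) :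
    ((hopfHom R d).toAdd : CokerD3 (F ⧸ R)) = (toCoker R ⟨d, d.2.1⟩).toAdd :=
  rfl

theorem hopfHom_eq_one_iff (d : ↥(R ⊓ commutator F)) :
    hopfHom R d = 1 ↔ toCoker R ⟨d, d.2.1⟩ = 1 := by
  rw [← toAdd_eq_zero, ← Submodule.coe_eq_zero, coe_toAdd_hopfHom, toAdd_eq_zero]

theorem ker_hopfHom :
    (hopfHom R).ker = ⁅(⊤ : Subgroup F), R⁆.subgroupOf (R ⊓ commutator F) := by
  ext d
  rw [MonoidHom.mem_ker, Subgroup.mem_subgroupOf, ← ker_toUnivExt_inf_commutator,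
    Subgroup.mem_inf, hopfHom_eq_one_iff, toCoker_eq_one_iff,
    and_iff_left (Subgroup.mem_inf.1 d.2).2]

theorem hopfHom_surjective : Function.Surjective (hopfHom R) := fun k => by
  obtain ⟨d, hd, hdk⟩ := exists_toCoker_eq_of_d2_eq_zero R k.toAdd.2
  refine ⟨⟨d, d.2, hd⟩, Multiplicative.toAdd.injective <| Subtype.ext ?_⟩
  rw [coe_toAdd_hopfHom]
  exact congrArg Multiplicative.toAdd hdk

end Hopf

end

/-- **Hopf's formula.** Let `F` be a free group, `R` a normal subgroup of `F` and
`G = F/R`. Then `H₂(G, ℤ) ≅ (R ∩ [F,F]) / [F,R]`. -/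
theorem hopf_formula {F : Type*} [Group F] [IsFreeGroup F] (R : Subgroup F) [R.Normal] :
    Nonempty (H2 (F ⧸ R) ≃+
      Additive (↥(R ⊓ commutator F) ⧸
        (⁅(⊤ : Subgroup F), R⁆.subgroupOf (R ⊓ commutator F)))) :=
  ⟨(h2EquivKerD2 (F ⧸ R)).toAddEquiv.trans <| (MulEquiv.toAdditiveLeft <|
    (QuotientGroup.quotientMulEquivOfEq (Hopf.ker_hopfHom R).symm).trans
      (QuotientGroup.quotientKerEquivOfSurjective _ (Hopf.hopfHom_surjective R))).symm⟩
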